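/- Let f : ℂ^N → ℝ be differentiable (over ℝ) with L-Lipschitz gradient ∇f for some L > 0, let h : ℂ^N → ℝ be convex and differentiable, and set F = h + f. Let C ⊆ ℂ^N be a nonempty closed convex set, let B ∈ ℂ^{N×N} be Hermitian with η·I_N ⪯ B for some η > 0, and let 0 < α ≤ η/L. Fix x ∈ C and let x⁺ ∈ C be a minimizer over C of x̄ ↦ S_h(x̄, x, ∇f(x), B, α). Then (η/(2α))·‖x⁺ − x‖² ≤ F(x) − F(x⁺). -/

import Mathlib

open scoped ComplexOrder

noncomputable section

/-- `ℂ^N` with the standard complex inner product (conjugate-linear in the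
first argument) and the induced norm. -/
abbrev EC (N : ℕ) := EuclideanSpace ℂ (Fin N)

/-- Weighted squared norm `‖z‖_W² = zᴴ W z` (its real part, which is the full
value when `W` is Hermitian). -/
def wnorm2 {N : ℕ} (W : Matrix (Fin N) (Fin N) ℂ) (z : EC N) : ℝ :=
  (dotProduct (fun i => starRingEnd ℂ (z i)) (W.mulVec (fun i => z i))).re

/-- Surrogate `S_h(x̄, x, g, W, α) = Re⟨g, x̄ − x⟩ + (1/(2α))‖x̄ − x‖_W² + h(x̄) − h(x)`. -/
def Sh {N : ℕ} (h : EC N → ℝ) (W : Matrix (Fin N) (Fin N) ℂ) (α : ℝ)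
    (g x xb : EC N) : ℝ :=
  (inner ℂ g (xb - x) : ℂ).re + (1 / (2 * α)) * wnorm2 W (xb - x) + h xb - h x

/-- `D_h^C(x, g, W, α) = −(2/α)·inf_{x̄ ∈ C} S_h(x̄, x, g, W, α)`. -/
def Dh {N : ℕ} (h : EC N → ℝ) (C : Set (EC N)) (W : Matrix (Fin N) (Fin N) ℂ)
    (α : ℝ) (g x : EC N) : ℝ :=
  -(2 / α) * sInf ((fun xb => Sh h W α g x xb) '' C)

/-- The real-linear continuous functional `d ↦ Re⟨g, d⟩`, used to say that a
real-differentiable `f : ℂ^N → ℝ` has gradient `g` at a point. -/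
def gradDual {N : ℕ} (g : EC N) : EC N →L[ℝ] ℝ :=
  Complex.reCLM.comp ((innerSL ℂ g).restrictScalars ℝ)

/-- The rank-one matrix `u·uᴴ` with entries `uᵢ · conj(uⱼ)`. -/
def rankOne {N : ℕ} (u : EC N) : Matrix (Fin N) (Fin N) ℂ :=
  Matrix.vecMulVec (fun i => u i) (fun i => starRingEnd ℂ (u i))

end

/-!
Write `u = x⁺ - x` and `g = ∇f(x)`. Comparing `x⁺` with the points `x⁺ + t (x - x⁺)` of `C`
and using convexity of `h`, then letting `t → 0`, gives the first-order estimate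
`Re⟨g, u⟩ + (1/α)‖u‖_B² + h(x⁺) - h(x) ≤ 0`. The descent lemma for the `L`-smooth part gives
`f(x⁺) ≤ f(x) + Re⟨g, u⟩ + (L/2)‖u‖²`. Adding the two and using `‖u‖_B² ≥ η‖u‖²` and `L ≤ η/α`
leaves a decrease of at least `(η/(2α))‖u‖²`.
-/

open Filter Topology

theorem image_le_add_fderiv_add_sq_norm {E : Type*} [NormedAddCommGroup E] [NormedSpace ℝ E]
    {f : E → ℝ} {f' : E → E →L[ℝ] ℝ} {L : ℝ} (hf : ∀ x, HasFDerivAt f (f' x) x)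
    (hlip : ∀ x y, ‖f' x - f' y‖ ≤ L * ‖x - y‖) (x y : E) :
    f y ≤ f x + f' x (y - x) + L / 2 * ‖y - x‖ ^ 2 := by
  set d := y - x
  set φ : ℝ → ℝ := fun t => f (x + t • d) - t * f' x d - L / 2 * t ^ 2 * ‖d‖ ^ 2
  have hφ' : ∀ t, HasDerivAt φ ((f' (x + t • d) - f' x) d - L * t * ‖d‖ ^ 2) t := by
    intro t
    have hline : HasDerivAt (fun t : ℝ => x + t • d) d t := by
      simpa using ((hasDerivAt_id t).smul_const d).const_add x
    refine ((((hf _).comp_hasDerivAt t hline).sub ((hasDerivAt_id t).mul_const (f' x d))).sub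
      (((hasDerivAt_pow 2 t).const_mul (L / 2)).mul_const (‖d‖ ^ 2))).congr_deriv ?_
    simp only [sub_apply]
    ring
  have hφ'_nonpos : ∀ t ∈ Set.Ioo (0 : ℝ) 1, (f' (x + t • d) - f' x) d - L * t * ‖d‖ ^ 2 ≤ 0 := by
    intro t ht
    rw [sub_nonpos]
    have hgrad : ‖f' (x + t • d) - f' x‖ ≤ L * (t * ‖d‖) := by
      simpa [norm_smul, abs_of_pos ht.1] using hlip (x + t • d) x
    calc (f' (x + t • d) - f' x) d ≤ ‖f' (x + t • d) - f' x‖ * ‖d‖ :=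
          (le_abs_self _).trans ((f' (x + t • d) - f' x).le_opNorm d)
      _ ≤ L * (t * ‖d‖) * ‖d‖ := by gcongr
      _ = L * t * ‖d‖ ^ 2 := by ring
  have hanti : AntitoneOn φ (Set.Icc 0 1) :=
    antitoneOn_of_deriv_nonpos (convex_Icc 0 1)
      (fun t _ => (hφ' t).continuousAt.continuousWithinAt)
      (fun t _ => (hφ' t).differentiableAt.differentiableWithinAt)
      (fun t ht => (hφ' t).deriv ▸ hφ'_nonpos t (by rwa [interior_Icc] at ht))
  have h01 := hanti (Set.left_mem_Icc.2 zero_le_one) (Set.right_mem_Icc.2 zero_le_one) zero_le_one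
  simp only [φ, d, one_smul, zero_smul, add_zero, add_sub_cancel] at h01
  linarith

theorem norm_gradDual_le {N : ℕ} (g : EC N) : ‖gradDual g‖ ≤ ‖g‖ :=
  ContinuousLinearMap.opNorm_le_bound _ (norm_nonneg g) fun d =>
    (Complex.abs_re_le_norm _).trans (norm_inner_le_norm g d)

theorem gradDual_sub {N : ℕ} (g₁ g₂ : EC N) : gradDual (g₁ - g₂) = gradDual g₁ - gradDual g₂ := by
  ext d
  simp [gradDual]

theorem wnorm2_smul {N : ℕ} (W : Matrix (Fin N) (Fin N) ℂ) (r : ℝ) (z : EC N) :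
    wnorm2 W (r • z) = r ^ 2 * wnorm2 W z := by
  have hz : (fun i => (r • z) i) = (r : ℂ) • fun i => z i := by
    funext i; simp [Complex.real_smul]
  have hz_conj : (fun i => starRingEnd ℂ ((r • z) i)) = (r : ℂ) • fun i => starRingEnd ℂ (z i) := by
    funext i; simp [Complex.real_smul]
  rw [wnorm2, wnorm2, hz, hz_conj, Matrix.mulVec_smul, smul_dotProduct, dotProduct_smul,
    smul_smul, smul_eq_mul, ← Complex.ofReal_mul, Complex.re_ofReal_mul, sq]

theorem mul_norm_sq_le_wnorm2 {N : ℕ} {B : Matrix (Fin N) (Fin N) ℂ} {η : ℝ}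
    (hB : (B - η • (1 : Matrix (Fin N) (Fin N) ℂ)).PosSemidef) (z : EC N) :
    η * ‖z‖ ^ 2 ≤ wnorm2 B z := by
  have hz : (star fun i => z i) ⬝ᵥ (fun i => z i) = ((‖z‖ ^ 2 : ℝ) : ℂ) := by
    rw [dotProduct_comm]
    exact_mod_cast inner_self_eq_norm_sq_to_K (𝕜 := ℂ) z
  have h := (Complex.le_def.mp (hB.dotProduct_mulVec_nonneg fun i => z i)).1
  rw [Matrix.sub_mulVec, Matrix.smul_mulVec, Matrix.one_mulVec, dotProduct_sub,
    dotProduct_smul, hz] at h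
  simp only [Complex.zero_re, Complex.sub_re, Complex.real_smul, Complex.re_ofReal_mul,
    Complex.ofReal_re] at h
  exact sub_nonneg.mp h

theorem linear_add_two_mul_quadratic_add_sub_nonpos_of_isMinOn {E : Type*} [AddCommGroup E]
    [Module ℝ E] {C : Set E} (hC : Convex ℝ C) {h : E → ℝ} (hh : ConvexOn ℝ C h)
    (ℓ : E →ₗ[ℝ] ℝ) {q : E → ℝ} (hq : ∀ (t : ℝ) u, q (t • u) = t ^ 2 * q u)
    {x xp : E} (hx : x ∈ C) (hxp : xp ∈ C)
    (hmin : IsMinOn (fun z => ℓ (z - x) + q (z - x) + h z - h x) C xp) :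
    ℓ (xp - x) + 2 * q (xp - x) + h xp - h x ≤ 0 := by
  set u := xp - x
  have hsegment : ∀ t ∈ Set.Ioc (0 : ℝ) 1, ℓ u + 2 * q u + h xp - h x ≤ t * q u := by
    rintro t ⟨ht0, ht1⟩
    set xt := (1 - t) • xp + t • x
    have hxt : xt - x = (1 - t) • u := by module
    have hle : ℓ u + q u + h xp - h x ≤ ℓ (xt - x) + q (xt - x) + h xt - h x :=
      hmin (hC hxp hx (by linarith) ht0.le (by ring))
    have hconv : h xt ≤ (1 - t) * h xp + t * h x :=
      hh.2 hxp hx (by linarith) ht0.le (by ring)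
    rw [hxt, map_smul, hq, smul_eq_mul] at hle
    nlinarith
  have hlim : Tendsto (fun t : ℝ => t * q u) (𝓝[>] 0) (𝓝 0) :=
    tendsto_nhdsWithin_of_tendsto_nhds (by simpa using (continuous_mul_const (q u)).tendsto 0)
  exact ge_of_tendsto hlim (eventually_of_mem (Ioc_mem_nhdsGT one_pos) hsegment)

theorem stmt12_general {N : ℕ} (f : EC N → ℝ) (gradf : EC N → EC N) (L : ℝ) (hL : 0 < L)
    (hfdiff : ∀ x : EC N, HasFDerivAt f (gradDual (gradf x)) x)
    (hlip : ∀ x₁ x₂ : EC N, ‖gradf x₁ - gradf x₂‖ ≤ L * ‖x₁ - x₂‖)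
    (h : EC N → ℝ) (hconv : ConvexOn ℝ Set.univ h)
    (F : EC N → ℝ) (hF : F = fun z => h z + f z)
    (C : Set (EC N)) (hCcv : Convex ℝ C)
    (B : Matrix (Fin N) (Fin N) ℂ)
    (η : ℝ)
    (hBlb : (B - η • (1 : Matrix (Fin N) (Fin N) ℂ)).PosSemidef)
    (α : ℝ) (hα : 0 < α) (hαle : α ≤ η / L)
    (x : EC N) (hx : x ∈ C) (xp : EC N) (hxp : xp ∈ C)
    (hmin : IsMinOn (fun xb => Sh h B α (gradf x) x xb) C xp) :
    (η / (2 * α)) * ‖xp - x‖ ^ 2 ≤ F x - F xp := by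
  subst hF
  have hdescent := image_le_add_fderiv_add_sq_norm hfdiff
    (fun x₁ x₂ => by simpa only [← gradDual_sub] using (norm_gradDual_le _).trans (hlip x₁ x₂))
    x xp
  have hopt := linear_add_two_mul_quadratic_add_sub_nonpos_of_isMinOn hCcv
    (hconv.subset (Set.subset_univ C) hCcv) (gradDual (gradf x)).toLinearMap
    (q := fun u => 1 / (2 * α) * wnorm2 B u) (fun t u => by simp only [wnorm2_smul]; ring)
    hx hxp hmin
  have hB := mul_norm_sq_le_wnorm2 hBlb (xp - x)
  have hL_le : L / 2 ≤ η / (2 * α) := by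
    rw [le_div_iff₀ (by positivity)]
    linarith [(le_div_iff₀ hL).1 hαle]
  have hη_le : η / (2 * α) * ‖xp - x‖ ^ 2 ≤ 1 / (2 * α) * wnorm2 B (xp - x) :=
    calc η / (2 * α) * ‖xp - x‖ ^ 2 = 1 / (2 * α) * (η * ‖xp - x‖ ^ 2) := by ring
      _ ≤ 1 / (2 * α) * wnorm2 B (xp - x) := by gcongr
  rw [ContinuousLinearMap.coe_coe] at hopt
  dsimp only
  linarith [mul_le_mul_of_nonneg_right hL_le (sq_nonneg ‖xp - x‖)]

/-- Sufficient decrease in terms of the step length. Under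
the same assumptions as Statement 11,
`(η/(2α))·‖x⁺ − x‖² ≤ F(x) − F(x⁺)`. -/
theorem stmt12 {N : ℕ} (f : EC N → ℝ) (gradf : EC N → EC N) (L : ℝ) (hL : 0 < L)
    (hfdiff : ∀ x : EC N, HasFDerivAt f (gradDual (gradf x)) x)
    (hlip : ∀ x₁ x₂ : EC N, ‖gradf x₁ - gradf x₂‖ ≤ L * ‖x₁ - x₂‖)
    (h : EC N → ℝ) (hconv : ConvexOn ℝ Set.univ h) (hdiff : Differentiable ℝ h)
    (F : EC N → ℝ) (hF : F = fun z => h z + f z)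
    (C : Set (EC N)) (hCne : C.Nonempty) (hCcl : IsClosed C) (hCcv : Convex ℝ C)
    (B : Matrix (Fin N) (Fin N) ℂ) (hBH : B.IsHermitian)
    (η : ℝ) (hη : 0 < η)
    (hBlb : (B - η • (1 : Matrix (Fin N) (Fin N) ℂ)).PosSemidef)
    (α : ℝ) (hα : 0 < α) (hαle : α ≤ η / L)
    (x : EC N) (hx : x ∈ C) (xp : EC N) (hxp : xp ∈ C)
    (hmin : IsMinOn (fun xb => Sh h B α (gradf x) x xb) C xp) :
    (η / (2 * α)) * ‖xp - x‖ ^ 2 ≤ F x - F xp :=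
  stmt12_general f gradf L hL hfdiff hlip h hconv F hF C hCcv B η hBlb α hα hαle x hx xp hxp hmin
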